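/- arXiv:math/0508490 — 2 statements merged into one kernel-verified Lean document; each statement's English description precedes it below -/
import Mathlib

section
/- (Upper bound for the exponential scheme step, Lemma 6.) Let G = -iH - (1/2)∑_k L_k* L_k with H self-adjoint, and suppose |ξ^k| ≤ a for k = 1,…,n. Then for every h ∈ (0,1] and every unit vector z ∈ ℂ^d, ‖exp(hG)(z + h D(z) + √h ∑_k ξ^k E_k(z))‖ ≤ 1 + (3/2)∑_k ‖L_k‖² + 2a ∑_k ‖L_k‖. -/
set_option maxHeartbeats 2000000

noncomputable section
open scoped InnerProductSpace
open ContinuousLinearMap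

abbrev V (d : ℕ) := EuclideanSpace ℂ (Fin d)

/-- The nonlinear drift term `D(z)`. -/
def Dop {d n : ℕ} (L : Fin n → (V d →L[ℂ] V d)) (z : V d) : V d :=
  ∑ k, (((inner ℂ z (L k z) : ℂ).re) • (L k z)
    - ((1/2 : ℝ) * ((inner ℂ z (L k z) : ℂ).re)^2) • z)

/-- The diffusion coefficient `E_k(z)`. -/
def Eop {d : ℕ} (L : V d →L[ℂ] V d) (z : V d) : V d :=
  L z - ((inner ℂ z (L z) : ℂ).re) • z

lemma re_inner_self {d : ℕ} (x : V d) : (inner ℂ x x : ℂ).re = ‖x‖ ^ 2 := by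
  have := inner_self_eq_norm_sq (𝕜 := ℂ) x
  simpa using this

/-- If `Re ⟪G v, v⟫ ≤ 0` for all `v` then `exp (t • G)` is a contraction for `t ≥ 0`. -/
lemma exp_contraction {d : ℕ} (G : V d →L[ℂ] V d)
    (hdis : ∀ v : V d, (inner ℂ (G v) v : ℂ).re ≤ 0)
    (h : ℝ) (hh : 0 ≤ h) (w : V d) :
    ‖NormedSpace.exp ((h : ℂ) • G) w‖ ≤ ‖w‖ := by
  set g : ℝ → V d := fun t => NormedSpace.exp ((t : ℂ) • G) w with hg
  have hderiv : ∀ t : ℝ, HasDerivAt g (G (g t)) t := by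
    intro t
    have h1 : HasDerivAt (fun s : ℂ => NormedSpace.exp (s • G))
        (G * NormedSpace.exp ((t : ℂ) • G)) (t : ℂ) :=
      hasDerivAt_exp_smul_const' G (t : ℂ)
    have hco : HasDerivAt (fun y : ℝ => (y : ℂ)) 1 t := by
      have := (hasDerivAt_id t).ofReal_comp; simpa using this
    have h2 : HasDerivAt (fun s : ℝ => NormedSpace.exp ((s : ℂ) • G))
        (G * NormedSpace.exp ((t : ℂ) • G)) t := by
      have h2' := h1.scomp t hco
      rw [one_smul] at h2'
      exact h2'
    have h3 := ((ContinuousLinearMap.apply ℂ (V d) w).restrictScalars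
        ℝ).hasFDerivAt.comp_hasDerivAt t h2
    simpa [g, ContinuousLinearMap.mul_apply, Function.comp_def] using h3
  set f : ℝ → ℝ := fun t => (inner ℂ (g t) (g t) : ℂ).re with hf
  have hfderiv : ∀ t : ℝ, HasDerivAt f
      ((inner ℂ (g t) (G (g t)) : ℂ) + (inner ℂ (G (g t)) (g t) : ℂ)).re t := by
    intro t
    exact Complex.reCLM.hasFDerivAt.comp_hasDerivAt t
      ((hderiv t).inner ℂ (hderiv t))
  have hfle : ∀ t : ℝ, ((inner ℂ (g t) (G (g t)) : ℂ) +
      (inner ℂ (G (g t)) (g t) : ℂ)).re ≤ 0 := by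
    intro t
    have heq : (inner ℂ (g t) (G (g t)) : ℂ) = starRingEnd ℂ (inner ℂ (G (g t)) (g t) : ℂ) := by
      rw [inner_conj_symm]
    rw [heq, Complex.add_re, Complex.conj_re]
    have := hdis (g t)
    linarith
  have hanti : AntitoneOn f (Set.Icc 0 h) := by
    apply antitoneOn_of_deriv_nonpos (convex_Icc 0 h)
    · exact fun t _ => (hfderiv t).continuousAt.continuousWithinAt
    · intro t ht
      exact ((hfderiv t).differentiableAt).differentiableWithinAt
    · intro t ht
      rw [(hfderiv t).deriv]
      exact hfle t
  have hg0 : g 0 = w := by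
    rw [hg]
    simp only [Complex.ofReal_zero]
    rw [zero_smul ℂ G, NormedSpace.exp_zero, ContinuousLinearMap.one_apply]
  have hh2 : f h ≤ f 0 :=
    hanti (Set.left_mem_Icc.2 hh) (Set.mem_Icc.2 ⟨hh, le_refl h⟩) hh
  have h0 : f 0 = ‖w‖ ^ 2 := by rw [hf]; simp only [hg0]; exact re_inner_self w
  have hfh : f h = ‖g h‖ ^ 2 := re_inner_self (g h)
  have hle : ‖g h‖ ^ 2 ≤ ‖w‖ ^ 2 := by rw [← hfh, ← h0]; exact hh2
  nlinarith [norm_nonneg (g h), norm_nonneg w]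

theorem stmt9 (d n : ℕ) (a : ℝ) (ha : 0 < a)
    (H : V d →L[ℂ] V d) (hH : IsSelfAdjoint H)
    (L : Fin n → (V d →L[ℂ] V d))
    (G : V d →L[ℂ] V d)
    (hG : G = (-Complex.I) • H - (1/2 : ℂ) • ∑ k, (adjoint (L k)).comp (L k)) :
    ∀ ξ : Fin n → ℝ, (∀ k, |ξ k| ≤ a) →
    ∀ h : ℝ, 0 < h → h ≤ 1 →
    ∀ z : V d, ‖z‖ = 1 →
      ‖NormedSpace.exp (h • G)
          (z + h • Dop L z + Real.sqrt h • ∑ k, ξ k • Eop (L k) z)‖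
        ≤ 1 + (3/2 : ℝ) * ∑ k, ‖L k‖^2 + 2 * a * ∑ k, ‖L k‖ := by
  intro ξ hξ h hh0 hh1 z hz
  -- dissipativity of G
  have hdis : ∀ v : V d, (inner ℂ (G v) v : ℂ).re ≤ 0 := by
    intro v
    have him : (inner ℂ (H v) v : ℂ).im = 0 := by
      have h1 : (inner ℂ (H v) v : ℂ) = (inner ℂ v (H v) : ℂ) := by
        conv_lhs => rw [← hH.adjoint_eq]
        rw [ContinuousLinearMap.adjoint_inner_left]
      have h2 : starRingEnd ℂ (inner ℂ (H v) v : ℂ) = (inner ℂ v (H v) : ℂ) :=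
        inner_conj_symm v (H v)
      have h3 : starRingEnd ℂ (inner ℂ (H v) v : ℂ) = (inner ℂ (H v) v : ℂ) := by
        rw [h2, ← h1]
      have h4 := congrArg Complex.im h3
      rw [Complex.conj_im] at h4
      linarith
    have hsum : (inner ℂ ((∑ k, (adjoint (L k)).comp (L k) : V d →L[ℂ] V d) v) v : ℂ)
        = ((∑ k, ‖L k v‖ ^ 2 : ℝ) : ℂ) := by
      simp only [ContinuousLinearMap.sum_apply, ContinuousLinearMap.comp_apply]
      rw [sum_inner]
      push_cast
      refine Finset.sum_congr rfl fun k _ => ?_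
      rw [ContinuousLinearMap.adjoint_inner_left]
      exact inner_self_eq_norm_sq_to_K (L k v)
    rw [hG]
    rw [ContinuousLinearMap.sub_apply, ContinuousLinearMap.smul_apply,
      ContinuousLinearMap.smul_apply, inner_sub_left, inner_smul_left, inner_smul_left,
      hsum]
    have hS : (0:ℝ) ≤ ∑ k, ‖L k v‖ ^ 2 :=
      Finset.sum_nonneg fun k _ => sq_nonneg _
    have hconjI : (starRingEnd ℂ) (-Complex.I) = Complex.I := by simp
    have hconj2 : (starRingEnd ℂ) (1/2 : ℂ) = 1/2 := by
      rw [map_div₀, map_one, map_ofNat]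
    rw [hconjI, hconj2]
    set c := (inner ℂ (H v) v : ℂ) with hc
    set S : ℝ := ∑ k, ‖L k v‖ ^ 2 with hSdef
    have hre2 : (Complex.I * c - (1/2 : ℂ) * ((S : ℝ) : ℂ)).re = -c.im - (1/2) * S := by
      simp [Complex.sub_re, Complex.mul_re, Complex.div_re]
      try ring
    rw [hre2, him]
    linarith
  -- the vector
  set w := z + h • Dop L z + Real.sqrt h • ∑ k, ξ k • Eop (L k) z with hw
  have hcontr : ‖NormedSpace.exp (h • G) w‖ ≤ ‖w‖ := by
    have : (h • G : V d →L[ℂ] V d) = (h : ℂ) • G := by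
      rw [← algebraMap_smul ℂ h G, Complex.coe_algebraMap]
    rw [this]
    exact exp_contraction G hdis h hh0.le w
  -- bound on |Re inner|
  have hre : ∀ k, |(inner ℂ z (L k z) : ℂ).re| ≤ ‖L k‖ := by
    intro k
    have hk : ‖L k z‖ ≤ ‖L k‖ := by
      have := (L k).le_opNorm z
      rwa [hz, mul_one] at this
    calc |(inner ℂ z (L k z) : ℂ).re| ≤ ‖(inner ℂ z (L k z) : ℂ)‖ :=
          Complex.abs_re_le_norm _
      _ = ‖(inner ℂ z (L k z) : ℂ)‖ := rfl
      _ ≤ ‖z‖ * ‖L k z‖ := norm_inner_le_norm z (L k z)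
      _ = ‖L k z‖ := by rw [hz, one_mul]
      _ ≤ ‖L k‖ := hk
  have hLz : ∀ k, ‖L k z‖ ≤ ‖L k‖ := by
    intro k
    have := (L k).le_opNorm z
    rwa [hz, mul_one] at this
  -- bound on Dop
  have hD : ‖Dop L z‖ ≤ (3/2 : ℝ) * ∑ k, ‖L k‖ ^ 2 := by
    rw [Dop, Finset.mul_sum]
    refine (norm_sum_le _ _).trans (Finset.sum_le_sum fun k _ => ?_)
    have h1 : ‖((inner ℂ z (L k z) : ℂ).re) • (L k z)‖ ≤ ‖L k‖ * ‖L k‖ := by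
      rw [norm_smul, Real.norm_eq_abs]
      exact mul_le_mul (hre k) (hLz k) (norm_nonneg _) (norm_nonneg _)
    have h2 : ‖((1/2 : ℝ) * ((inner ℂ z (L k z) : ℂ).re)^2) • z‖ ≤ (1/2) * ‖L k‖ ^ 2 := by
      rw [norm_smul, Real.norm_eq_abs, hz, mul_one, abs_mul, abs_of_nonneg (by norm_num : (0:ℝ) ≤ 1/2), abs_of_nonneg (sq_nonneg _)]
      have hsq : ((inner ℂ z (L k z) : ℂ).re) ^ 2 ≤ ‖L k‖ ^ 2 := by
        have := hre k
        nlinarith [abs_nonneg ((inner ℂ z (L k z) : ℂ).re), neg_abs_le ((inner ℂ z (L k z) : ℂ).re), le_abs_self ((inner ℂ z (L k z) : ℂ).re)]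
      linarith
    calc ‖((inner ℂ z (L k z) : ℂ).re) • (L k z)
          - ((1/2 : ℝ) * ((inner ℂ z (L k z) : ℂ).re)^2) • z‖
        ≤ ‖((inner ℂ z (L k z) : ℂ).re) • (L k z)‖
          + ‖((1/2 : ℝ) * ((inner ℂ z (L k z) : ℂ).re)^2) • z‖ := norm_sub_le _ _
      _ ≤ ‖L k‖ * ‖L k‖ + (1/2) * ‖L k‖ ^ 2 := add_le_add h1 h2
      _ = 3/2 * ‖L k‖ ^ 2 := by ring
  -- bound on the noise term
  have hE : ‖∑ k, ξ k • Eop (L k) z‖ ≤ 2 * a * ∑ k, ‖L k‖ := by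
    rw [show (2 : ℝ) * a * ∑ k, ‖L k‖ = ∑ k, a * (2 * ‖L k‖) by rw [Finset.mul_sum]; congr 1; ext k; ring]
    refine (norm_sum_le _ _).trans (Finset.sum_le_sum fun k _ => ?_)
    rw [norm_smul, Real.norm_eq_abs]
    have hEk : ‖Eop (L k) z‖ ≤ 2 * ‖L k‖ := by
      rw [Eop]
      calc ‖L k z - ((inner ℂ z (L k z) : ℂ).re) • z‖
          ≤ ‖L k z‖ + ‖((inner ℂ z (L k z) : ℂ).re) • z‖ := norm_sub_le _ _
        _ ≤ ‖L k‖ + ‖L k‖ := by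
            refine add_le_add (hLz k) ?_
            rw [norm_smul, Real.norm_eq_abs, hz, mul_one]
            exact hre k
        _ = 2 * ‖L k‖ := by ring
    exact mul_le_mul (hξ k) hEk (norm_nonneg _) ha.le
  -- combine
  have hsqrt : Real.sqrt h ≤ 1 := by
    rw [show (1:ℝ) = Real.sqrt 1 by simp]
    exact Real.sqrt_le_sqrt hh1
  have hsqrt0 : 0 ≤ Real.sqrt h := Real.sqrt_nonneg h
  have hDnn : (0:ℝ) ≤ (3/2 : ℝ) * ∑ k, ‖L k‖ ^ 2 := by positivity
  have hEnn : (0:ℝ) ≤ 2 * a * ∑ k, ‖L k‖ := by positivity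
  have hwnorm : ‖w‖ ≤ 1 + (3/2 : ℝ) * ∑ k, ‖L k‖^2 + 2 * a * ∑ k, ‖L k‖ := by
    calc ‖w‖ ≤ ‖z + h • Dop L z‖ + ‖Real.sqrt h • ∑ k, ξ k • Eop (L k) z‖ :=
          norm_add_le _ _
      _ ≤ ‖z‖ + ‖h • Dop L z‖ + ‖Real.sqrt h • ∑ k, ξ k • Eop (L k) z‖ := by
          gcongr; exact norm_add_le _ _
      _ ≤ 1 + (3/2 : ℝ) * ∑ k, ‖L k‖^2 + 2 * a * ∑ k, ‖L k‖ := by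
          rw [hz, norm_smul, norm_smul, Real.norm_eq_abs, Real.norm_eq_abs,
            abs_of_pos hh0, abs_of_nonneg hsqrt0]
          have t1 : h * ‖Dop L z‖ ≤ (3/2 : ℝ) * ∑ k, ‖L k‖^2 := by
            calc h * ‖Dop L z‖ ≤ 1 * ((3/2 : ℝ) * ∑ k, ‖L k‖^2) := by
                  exact mul_le_mul hh1 hD (norm_nonneg _) (by norm_num)
              _ = (3/2 : ℝ) * ∑ k, ‖L k‖^2 := one_mul _
          have t2 : Real.sqrt h * ‖∑ k, ξ k • Eop (L k) z‖ ≤ 2 * a * ∑ k, ‖L k‖ := by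
            calc Real.sqrt h * ‖∑ k, ξ k • Eop (L k) z‖
                ≤ 1 * (2 * a * ∑ k, ‖L k‖) := mul_le_mul hsqrt hE (norm_nonneg _) (by norm_num)
              _ = 2 * a * ∑ k, ‖L k‖ := one_mul _
          linarith
  exact hcontr.trans hwnorm
end
end

section
/- (Generator identity for the mean observable.) Let G = -iH - (1/2)∑_k L_k* L_k with H self-adjoint, D(z) = ∑_k(Re⟨z,L_k z⟩ L_k z - (1/2)Re²⟨z,L_k z⟩ z), E_k(z) = L_k z - Re⟨z,L_k z⟩ z, and let B be any d×d complex matrix. Then for every unit vector z ∈ ℂ^d: ⟨Gz + D(z), Bz⟩ + ⟨z, B(Gz + D(z))⟩ + ∑_{k=1}^n ⟨E_k(z), B E_k(z)⟩ = ⟨z, (G*B + BG + ∑_k L_k* B L_k) z⟩. -/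
noncomputable section
open scoped InnerProductSpace
open ContinuousLinearMap

lemma rsmul {d : ℕ} (r : ℝ) (v : V d) : r • v = (r:ℂ) • v := rfl

theorem stmt17 (d n : ℕ) (H : V d →L[ℂ] V d) (hH : IsSelfAdjoint H)
    (L : Fin n → (V d →L[ℂ] V d))
    (G : V d →L[ℂ] V d)
    (hG : G = (-Complex.I) • H - (1/2 : ℂ) • ∑ k, (adjoint (L k)).comp (L k))
    (B : V d →L[ℂ] V d) :
    ∀ z : V d, ‖z‖ = 1 →
      (inner ℂ (G z + Dop L z) (B z) : ℂ) + (inner ℂ z (B (G z + Dop L z)) : ℂ)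
        + ∑ k, (inner ℂ (Eop (L k) z) (B (Eop (L k) z)) : ℂ)
      = (inner ℂ z (((adjoint G).comp B + B.comp G
          + ∑ k, (adjoint (L k)).comp (B.comp (L k))) z) : ℂ) := by
  intro z hz
  simp only [Dop, Eop, add_apply, comp_apply, sum_apply, adjoint_inner_right,
    inner_add_left, inner_add_right, inner_sub_left, inner_sub_right,
    rsmul, map_smul, inner_smul_left, inner_smul_right, Complex.conj_ofReal,
    map_add, map_sub, map_sum, inner_sum, sum_inner]
  push_cast
  have e : ∑ x : Fin n,
        ((inner ℂ ((L x) z) (B ((L x) z)) : ℂ)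
          - ((inner ℂ z ((L x) z) : ℂ).re : ℂ) * (inner ℂ z (B ((L x) z)) : ℂ)
          - ((inner ℂ z ((L x) z) : ℂ).re : ℂ) * ((inner ℂ ((L x) z) (B z) : ℂ)
              - ((inner ℂ z ((L x) z) : ℂ).re : ℂ) * (inner ℂ z (B z) : ℂ)))
      = (∑ x : Fin n, (inner ℂ ((L x) z) (B ((L x) z)) : ℂ))
        - (∑ x : Fin n, (((inner ℂ z ((L x) z) : ℂ).re : ℂ) * (inner ℂ ((L x) z) (B z) : ℂ)
            - 1 / 2 * ((inner ℂ z ((L x) z) : ℂ).re : ℂ) ^ 2 * (inner ℂ z (B z) : ℂ)))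
        - (∑ x : Fin n, (((inner ℂ z ((L x) z) : ℂ).re : ℂ) * (inner ℂ z (B ((L x) z)) : ℂ)
            - 1 / 2 * ((inner ℂ z ((L x) z) : ℂ).re : ℂ) ^ 2 * (inner ℂ z (B z) : ℂ))) := by
    rw [← Finset.sum_sub_distrib, ← Finset.sum_sub_distrib]
    exact Finset.sum_congr rfl fun k _ => by ring
  linear_combination e
end
end
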